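/- Let 0 < H1 < H2 < 1, let d ≥ 1 be an integer and N ≥ 0 an integer. Then the double integral ∫₀¹∫₀¹ (t² + s²)^N / (t^{2H1} + s^{2H2})^{N + d/2} dt ds is finite if and only if 2·H2·(N + d/2) < 1 + 2N + H2/H1. -/

import Mathlib

/-!
Put `u = t^(H1/H2)`, so that `t^(2 H1) = u^(2 H2)`, and `c = 2N - 2 H2 p` with `p = N + d/2`.
As `H1 < H2` and `t ≤ 1` we have `t ≤ u`, hence the integrand is at most `2^N max(u, s)^c`,
while on the region `u < s` it is at least `2^(-p) s^c`. The part `s ≤ u` contributes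
`∫ t^((H1/H2)(c+1)) dt`; on `u < s`, integrating first in `t` gives `∫ s^(c + H2/H1) ds`.
Both exponents exceed `-1` exactly when `2 H2 p < 1 + 2N + H2/H1`.
-/

open MeasureTheory Set Real
open scoped ENNReal

noncomputable def anisotropicKernel (H1 H2 p : ℝ) (N : ℕ) (t s : ℝ) : ℝ :=
  (t ^ 2 + s ^ 2) ^ N / (t ^ (2 * H1) + s ^ (2 * H2)) ^ p

theorem rpow_div_rpow_mul_cancel {x : ℝ} (hx : 0 ≤ x) (a : ℝ) {b : ℝ} (hb : b ≠ 0) (c : ℝ) :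
    (x ^ (a / b)) ^ (c * b) = x ^ (c * a) := by
  rw [← rpow_mul hx]
  congr 1
  field_simp

theorem anisotropicKernel_le {H1 H2 p : ℝ} (hH1 : 0 < H1) (hH12 : H1 ≤ H2) (hp : 0 ≤ p) (N : ℕ)
    {t s : ℝ} (ht : t ∈ Ioc 0 1) (hs : 0 < s) :
    anisotropicKernel H1 H2 p N t s ≤ 2 ^ N * max (t ^ (H1 / H2)) s ^ (2 * N - 2 * H2 * p) := by
  have hH2 : 0 < H2 := hH1.trans_le hH12
  set u := t ^ (H1 / H2)
  set m := max u s
  have hu : 0 < u := rpow_pos_of_pos ht.1 _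
  have hm : 0 < m := lt_max_of_lt_right hs
  have htu : t ≤ u := by
    simpa using rpow_le_rpow_of_exponent_ge ht.1 ht.2 ((div_le_one hH2).2 hH12)
  have hnum : (t ^ 2 + s ^ 2) ^ N ≤ 2 ^ N * m ^ (2 * (N : ℝ)) := by
    have hts : t ^ 2 + s ^ 2 ≤ 2 * m ^ 2 := by
      nlinarith [pow_le_pow_left₀ ht.1.le (htu.trans (le_max_left u s)) 2,
        pow_le_pow_left₀ hs.le (le_max_right u s) 2]
    calc (t ^ 2 + s ^ 2) ^ N ≤ (2 * m ^ 2) ^ N := pow_le_pow_left₀ (by positivity) hts N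
      _ = 2 ^ N * m ^ (2 * (N : ℝ)) := by
        rw [mul_pow, ← pow_mul, ← rpow_natCast m (2 * N), Nat.cast_mul, Nat.cast_ofNat]
  have hden : m ^ (2 * H2 * p) ≤ (t ^ (2 * H1) + s ^ (2 * H2)) ^ p := by
    rw [rpow_mul hm.le, ← rpow_div_rpow_mul_cancel ht.1.le H1 hH2.ne']
    refine rpow_le_rpow (by positivity) ?_ hp
    have hu' := rpow_nonneg hu.le (2 * H2)
    have hs' := rpow_nonneg hs.le (2 * H2)
    rcases le_total u s with h | h
    · rw [show m = s from max_eq_right h]; linarith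
    · rw [show m = u from max_eq_left h]; linarith
  calc anisotropicKernel H1 H2 p N t s ≤ 2 ^ N * m ^ (2 * (N : ℝ)) / m ^ (2 * H2 * p) :=
        div_le_div₀ (by positivity) hnum (by positivity) hden
    _ = 2 ^ N * m ^ (2 * N - 2 * H2 * p) := by rw [rpow_sub hm, mul_div_assoc]

theorem le_anisotropicKernel {H1 H2 p : ℝ} (hH2 : 0 < H2) (hp : 0 ≤ p) (N : ℕ) {t s : ℝ}
    (ht : 0 < t) (hts : t ^ (H1 / H2) < s) :
    2 ^ (-p) * s ^ (2 * N - 2 * H2 * p) ≤ anisotropicKernel H1 H2 p N t s := by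
  have hs : 0 < s := (rpow_pos_of_pos ht _).trans hts
  have hnum : s ^ (2 * (N : ℝ)) ≤ (t ^ 2 + s ^ 2) ^ N := by
    rw [rpow_mul hs.le, rpow_natCast]; norm_cast
    exact pow_le_pow_left₀ (by positivity) (by nlinarith) N
  have hden : (t ^ (2 * H1) + s ^ (2 * H2)) ^ p ≤ 2 ^ p * s ^ (2 * H2 * p) := by
    rw [rpow_mul hs.le (2 * H2) p, ← mul_rpow zero_le_two (by positivity)]
    refine rpow_le_rpow (by positivity) ?_ hp
    rw [← rpow_div_rpow_mul_cancel ht.le H1 hH2.ne']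
    linarith [rpow_le_rpow (rpow_nonneg ht.le _) hts.le (by positivity : 0 ≤ 2 * H2)]
  calc 2 ^ (-p) * s ^ (2 * N - 2 * H2 * p) = s ^ (2 * (N : ℝ)) / (2 ^ p * s ^ (2 * H2 * p)) := by
        rw [rpow_neg zero_le_two, rpow_sub hs]; ring
    _ ≤ anisotropicKernel H1 H2 p N t s := div_le_div₀ (by positivity) hnum (by positivity) hden

theorem lintegral_Ioc_rpow_lt_top_iff {a e : ℝ} (ha : 0 < a) :
    ∫⁻ x in Ioc 0 a, ENNReal.ofReal (x ^ e) < ∞ ↔ -1 < e := by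
  rw [lt_top_iff_ne_top, lintegral_ofReal_ne_top_iff_integrable, ← IntegrableOn,
    integrableOn_congr_set_ae Ioo_ae_eq_Ioc.symm, intervalIntegral.integrableOn_Ioo_rpow_iff ha]
  · fun_prop
  · filter_upwards [ae_restrict_mem measurableSet_Ioc] with x hx using rpow_nonneg hx.1.le e

theorem lintegral_Ioc_max_rpow {u : ℝ} (hu : u ∈ Ioc 0 1) (c : ℝ) :
    ∫⁻ s in Ioc 0 1, ENNReal.ofReal (max u s ^ c) =
      ENNReal.ofReal (u ^ (c + 1)) + ∫⁻ s in Ioc u 1, ENNReal.ofReal (s ^ c) := by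
  rw [← Ioc_union_Ioc_eq_Ioc hu.1.le hu.2,
    lintegral_union measurableSet_Ioc (Ioc_disjoint_Ioc_of_le le_rfl)]
  congr 1
  · rw [setLIntegral_congr_fun measurableSet_Ioc (fun s hs => by rw [max_eq_left hs.2]),
      setLIntegral_const, Real.volume_Ioc, sub_zero, ← ENNReal.ofReal_mul (rpow_nonneg hu.1.le c),
      rpow_add_one hu.1.ne']
  · exact setLIntegral_congr_fun measurableSet_Ioc (fun s hs => by rw [max_eq_right hs.1.le])

/-- Tonelli: for `s ∈ (0, 1]` the `t`-section of `{t ^ r < s}` in `(0, 1]` is `(0, s^(1/r))`. -/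
theorem lintegral_Ioc_lintegral_Ioc_rpow {r : ℝ} (hr : 0 < r) (c : ℝ) :
    ∫⁻ t in Ioc 0 1, ∫⁻ s in Ioc (t ^ r) 1, ENNReal.ofReal (s ^ c) =
      ∫⁻ s in Ioc 0 1, ENNReal.ofReal (s ^ (c + r⁻¹)) := by
  set F : ℝ → ℝ → ℝ≥0∞ := fun t s => (Ioi (t ^ r)).indicator (fun s => ENNReal.ofReal (s ^ c)) s
  have hF : Measurable (Function.uncurry F) := by
    change Measurable fun q : ℝ × ℝ => if q.1 ^ r < q.2 then ENNReal.ofReal (q.2 ^ c) else 0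
    exact Measurable.ite (measurableSet_lt (by fun_prop) (by fun_prop)) (by fun_prop)
      measurable_const
  have inner_s : ∀ t ∈ Ioc (0:ℝ) 1, ∫⁻ s in Ioc (t ^ r) 1, ENNReal.ofReal (s ^ c) =
      ∫⁻ s in Ioc 0 1, F t s := by
    intro t ht
    rw [lintegral_indicator measurableSet_Ioi, Measure.restrict_restrict measurableSet_Ioi,
      inter_comm, Ioc_inter_Ioi, max_eq_right (rpow_nonneg ht.1.le r)]
  have inner_t : ∀ s ∈ Ioc (0:ℝ) 1, ∫⁻ t in Ioc 0 1, F t s = ENNReal.ofReal (s ^ (c + r⁻¹)) := by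
    intro s hs
    have hset : {t | t ^ r < s} ∩ Ioc 0 1 = Ioo 0 (s ^ r⁻¹) := by
      ext t
      simp only [mem_inter_iff, mem_ofPred_eq, mem_Ioc, mem_Ioo]
      constructor
      · rintro ⟨hts, ht0, -⟩
        exact ⟨ht0, (lt_rpow_inv_iff_of_pos ht0.le hs.1.le hr).2 hts⟩
      · rintro ⟨ht0, hts⟩
        refine ⟨(lt_rpow_inv_iff_of_pos ht0.le hs.1.le hr).1 hts, ht0, hts.le.trans ?_⟩
        exact rpow_le_one hs.1.le hs.2 (inv_nonneg.2 hr.le)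
    change ∫⁻ t in Ioc 0 1, {t | t ^ r < s}.indicator (fun _ => ENNReal.ofReal (s ^ c)) t = _
    rw [lintegral_indicator (measurableSet_lt (by fun_prop) measurable_const), setLIntegral_const,
      Measure.restrict_apply (measurableSet_lt (by fun_prop) measurable_const), hset,
      Real.volume_Ioo, sub_zero, ← ENNReal.ofReal_mul (rpow_nonneg hs.1.le c), ← rpow_add hs.1]
  rw [setLIntegral_congr_fun measurableSet_Ioc inner_s, lintegral_lintegral_swap hF.aemeasurable,
    setLIntegral_congr_fun measurableSet_Ioc inner_t]

theorem lintegral_anisotropicKernel_le {H1 H2 p : ℝ} (hH1 : 0 < H1) (hH12 : H1 ≤ H2) (hp : 0 ≤ p)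
    (N : ℕ) :
    ∫⁻ t in Ioc 0 1, ∫⁻ s in Ioc 0 1, ENNReal.ofReal (anisotropicKernel H1 H2 p N t s) ≤
      2 ^ N * ((∫⁻ t in Ioc 0 1, ENNReal.ofReal (t ^ (H1 / H2 * (2 * N - 2 * H2 * p + 1)))) +
        ∫⁻ s in Ioc 0 1, ENNReal.ofReal (s ^ (2 * N - 2 * H2 * p + H2 / H1))) := by
  set c := 2 * (N : ℝ) - 2 * H2 * p
  set r := H1 / H2
  have hr : 0 < r := div_pos hH1 (hH1.trans_le hH12)
  have inner : ∀ t ∈ Ioc (0 : ℝ) 1,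
      ∫⁻ s in Ioc 0 1, ENNReal.ofReal (anisotropicKernel H1 H2 p N t s) ≤
        2 ^ N * (ENNReal.ofReal (t ^ (r * (c + 1))) +
          ∫⁻ s in Ioc (t ^ r) 1, ENNReal.ofReal (s ^ c)) := by
    intro t ht
    have hu : t ^ r ∈ Ioc 0 1 := ⟨rpow_pos_of_pos ht.1 r, rpow_le_one ht.1.le ht.2 hr.le⟩
    calc ∫⁻ s in Ioc 0 1, ENNReal.ofReal (anisotropicKernel H1 H2 p N t s)
        ≤ ∫⁻ s in Ioc 0 1, 2 ^ N * ENNReal.ofReal (max (t ^ r) s ^ c) := by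
          refine setLIntegral_mono' measurableSet_Ioc fun s hs => ?_
          rw [← ENNReal.ofReal_ofNat, ← ENNReal.ofReal_pow zero_le_two,
            ← ENNReal.ofReal_mul (by positivity)]
          exact ENNReal.ofReal_le_ofReal (anisotropicKernel_le hH1 hH12 hp N ht hs.1)
      _ = 2 ^ N * (ENNReal.ofReal (t ^ (r * (c + 1))) +
          ∫⁻ s in Ioc (t ^ r) 1, ENNReal.ofReal (s ^ c)) := by
        rw [lintegral_const_mul' _ _ (by simp), lintegral_Ioc_max_rpow hu, ← rpow_mul ht.1.le]
  calc _ ≤ ∫⁻ t in Ioc 0 1, 2 ^ N * (ENNReal.ofReal (t ^ (r * (c + 1))) +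
          ∫⁻ s in Ioc (t ^ r) 1, ENNReal.ofReal (s ^ c)) :=
        setLIntegral_mono' measurableSet_Ioc inner
    _ = _ := by
      rw [lintegral_const_mul' _ _ (by simp), lintegral_add_left (by fun_prop),
        lintegral_Ioc_lintegral_Ioc_rpow hr, inv_div]

theorem le_lintegral_anisotropicKernel {H1 H2 p : ℝ} (hH1 : 0 < H1) (hH2 : 0 < H2) (hp : 0 ≤ p)
    (N : ℕ) :
    ENNReal.ofReal (2 ^ (-p)) *
        ∫⁻ s in Ioc 0 1, ENNReal.ofReal (s ^ (2 * N - 2 * H2 * p + H2 / H1)) ≤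
      ∫⁻ t in Ioc 0 1, ∫⁻ s in Ioc 0 1, ENNReal.ofReal (anisotropicKernel H1 H2 p N t s) := by
  rw [← inv_div, ← lintegral_Ioc_lintegral_Ioc_rpow (div_pos hH1 hH2),
    ← lintegral_const_mul' _ _ ENNReal.ofReal_ne_top]
  refine setLIntegral_mono' measurableSet_Ioc fun t ht => ?_
  rw [← lintegral_const_mul' _ _ ENNReal.ofReal_ne_top]
  calc _ ≤ ∫⁻ s in Ioc (t ^ (H1 / H2)) 1, ENNReal.ofReal (anisotropicKernel H1 H2 p N t s) := by
        refine setLIntegral_mono' measurableSet_Ioc fun s hs => ?_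
        rw [← ENNReal.ofReal_mul (by positivity)]
        exact ENNReal.ofReal_le_ofReal (le_anisotropicKernel hH2 hp N ht.1 hs.1)
    _ ≤ _ := lintegral_mono_set (Ioc_subset_Ioc_left (rpow_nonneg ht.1.le _))

theorem integral_finite_iff (H1 H2 : ℝ) (hH1 : 0 < H1) (hH12 : H1 < H2)
    (d : ℕ) (N : ℕ) :
    (∫⁻ t in Ioc (0:ℝ) 1, ∫⁻ s in Ioc (0:ℝ) 1,
        ENNReal.ofReal ((t ^ 2 + s ^ 2) ^ N /
          (t ^ (2 * H1) + s ^ (2 * H2)) ^ ((N : ℝ) + (d : ℝ) / 2))) < ⊤ ↔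
      2 * H2 * ((N : ℝ) + (d : ℝ) / 2) < 1 + 2 * (N : ℝ) + H2 / H1 := by
  set p : ℝ := N + d / 2
  have hp : 0 ≤ p := by positivity
  have hH2 : 0 < H2 := hH1.trans hH12
  change ∫⁻ t in Ioc 0 1, ∫⁻ s in Ioc 0 1, ENNReal.ofReal (anisotropicKernel H1 H2 p N t s) < ∞ ↔ _
  have hcond : 2 * H2 * p < 1 + 2 * N + H2 / H1 ↔ -1 < 2 * N - 2 * H2 * p + H2 / H1 := by
    constructor <;> intro h <;> linarith
  rw [hcond, ← lintegral_Ioc_rpow_lt_top_iff one_pos]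
  constructor
  · intro hI
    have hlow := ((le_lintegral_anisotropicKernel hH1 hH2 hp N).trans_lt hI).ne
    exact ENNReal.lt_top_of_mul_ne_top_right hlow (by positivity)
  · intro h
    have hr : -1 < H1 / H2 * (2 * N - 2 * H2 * p + 1) := by
      have hc := mul_lt_mul_of_pos_left ((lintegral_Ioc_rpow_lt_top_iff one_pos).1 h) hH1
      rw [mul_add, mul_div_cancel₀ _ hH1.ne'] at hc
      rw [div_mul_eq_mul_div, lt_div_iff₀ hH2]
      linarith
    refine (lintegral_anisotropicKernel_le hH1 hH12.le hp N).trans_lt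
      (ENNReal.mul_lt_top (by simp) (ENNReal.add_lt_top.2 ⟨?_, h⟩))
    exact (lintegral_Ioc_rpow_lt_top_iff one_pos).2 hr
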